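/- arXiv:2012.02187 — 5 statements merged into one kernel-verified Lean document; each statement's English description precedes it below -/
import Mathlib

section
/- Let $M_{n+1}$ be the space of complex $(n+1)\times(n+1)$ matrices and include $M_n$ as the upper-left block. Let $\tau \in M_{n+1}$ be such that no eigenvalue of $\tau$ is an eigenvalue of its upper-left $n\times n$ submatrix $\tau_H$. Let $x \in M_{n+1}$ with $[x,\tau]=0$, and let $z = \mathrm{diag}(1,\dots,1,0)$ with $n$ ones. If $[x,[z,\tau]] = [y,\tau]$ for some $y \in M_n$ (embedded in $M_{n+1}$ as the upper-left block), then $x$ is a scalar matrix. -/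
open Matrix

lemma mem_spectrum_of_vecMul {m : Type*} [Fintype m] [DecidableEq m]
    (M : Matrix m m ℂ) (μ : ℂ) (w : m → ℂ) (hw : w ≠ 0) (h : w ᵥ* M = μ • w) :
    μ ∈ spectrum ℂ M := by
  rw [spectrum.mem_iff, Matrix.isUnit_iff_isUnit_det, isUnit_iff_ne_zero, ne_eq, not_not,
    ← Matrix.exists_vecMul_eq_zero_iff]
  refine ⟨w, hw, ?_⟩
  have h1 : w ᵥ* (algebraMap ℂ (Matrix m m ℂ) μ) = μ • w := by
    rw [Algebra.algebraMap_eq_smul_one, ← Matrix.mulVec_transpose, Matrix.transpose_smul,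
      Matrix.transpose_one, Matrix.smul_mulVec, Matrix.one_mulVec]
  rw [Matrix.vecMul_sub, h1, h, sub_self]

lemma spectrum_transpose {m : Type*} [Fintype m] [DecidableEq m]
    (M : Matrix m m ℂ) : spectrum ℂ Mᵀ = spectrum ℂ M := by
  ext μ
  rw [spectrum.mem_iff, spectrum.mem_iff, Matrix.isUnit_iff_isUnit_det,
    Matrix.isUnit_iff_isUnit_det]
  have : algebraMap ℂ (Matrix m m ℂ) μ - Mᵀ = (algebraMap ℂ (Matrix m m ℂ) μ - M)ᵀ := by
    rw [Matrix.transpose_sub]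
    congr 1
    rw [Algebra.algebraMap_eq_smul_one (A := Matrix m m ℂ), Matrix.transpose_smul, Matrix.transpose_one]
  rw [this, Matrix.det_transpose]

lemma ctrl (n : ℕ) (τ : Matrix (Fin (n + 1)) (Fin (n + 1)) ℂ)
    (hspec : ∀ μ : ℂ, μ ∈ spectrum ℂ τ →
      μ ∉ spectrum ℂ (τ.submatrix Fin.castSucc Fin.castSucc)) :
    Submodule.span ℂ (Set.range fun k : ℕ =>
      (τ ^ k) *ᵥ (Pi.single (Fin.last n) 1 : Fin (n + 1) → ℂ)) = ⊤ := by
  set v : Fin (n + 1) → ℂ := Pi.single (Fin.last n) 1 with hv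
  by_contra hS
  obtain ⟨φ, hφ0, hφ⟩ := Submodule.exists_dual_map_eq_bot_of_lt_top
    (p := Submodule.span ℂ (Set.range fun k : ℕ => (τ ^ k) *ᵥ v))
    (lt_top_iff_ne_top.mpr hS) inferInstance
  have hvan : ∀ s ∈ Submodule.span ℂ (Set.range fun k : ℕ => (τ ^ k) *ᵥ v), φ s = 0 := by
    intro s hs
    have : φ s ∈ (Submodule.span ℂ (Set.range fun k : ℕ => (τ ^ k) *ᵥ v)).map φ :=
      Submodule.mem_map_of_mem hs
    rw [hφ] at this
    simpa using this
  set w0 : Fin (n + 1) → ℂ := fun i => φ (Pi.single i 1) with hw0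
  have hrep : ∀ m : Fin (n + 1) → ℂ, φ m = m ⬝ᵥ w0 := by
    intro m
    conv_lhs => rw [← Finset.univ_sum_single m]
    rw [map_sum, dotProduct]
    refine Finset.sum_congr rfl fun i _ => ?_
    have : Pi.single i (m i) = m i • (Pi.single i 1 : Fin (n + 1) → ℂ) := by
      funext j
      simp [Pi.single_apply]
    rw [this, LinearMap.map_smul, smul_eq_mul]
  -- the annihilator submodule
  set U : Submodule ℂ (Fin (n + 1) → ℂ) :=
    { carrier := {w | ∀ k : ℕ, w ⬝ᵥ ((τ ^ k) *ᵥ v) = 0}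
      add_mem' := fun {a b} ha hb k => by simp [add_dotProduct, ha k, hb k]
      zero_mem' := fun k => by simp
      smul_mem' := fun c a ha k => by simp [smul_dotProduct, ha k] } with hU
  have hw0U : w0 ∈ U := by
    intro k
    rw [dotProduct_comm, ← hrep]
    exact hvan _ (Submodule.subset_span ⟨k, rfl⟩)
  have hw0ne : w0 ≠ 0 := by
    intro h0
    apply hφ0
    refine LinearMap.ext fun m => ?_
    rw [hrep, h0]
    simp
  have hUne : Nontrivial U := Submodule.nontrivial_iff_ne_bot.mpr
    (Submodule.ne_bot_iff U |>.mpr ⟨w0, hw0U, hw0ne⟩)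
  have hUinv : ∀ w ∈ U, (Matrix.mulVecLin τᵀ) w ∈ U := by
    intro w hw k
    have : (w ᵥ* τ) ⬝ᵥ ((τ ^ k) *ᵥ v) = w ⬝ᵥ ((τ ^ (k + 1)) *ᵥ v) := by
      rw [← Matrix.dotProduct_mulVec, Matrix.mulVec_mulVec, ← pow_succ']
    simpa [Matrix.mulVecLin_apply, Matrix.mulVec_transpose] using this.trans (hw (k + 1))
  set f : Module.End ℂ U := (Matrix.mulVecLin τᵀ).restrict hUinv with hf
  obtain ⟨μ, hμ⟩ := Module.End.exists_eigenvalue f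
  obtain ⟨w, hwe⟩ := hμ.exists_hasEigenvector
  set W : Fin (n + 1) → ℂ := (w : Fin (n + 1) → ℂ) with hW
  have hW0 : W ≠ 0 := fun h => hwe.right (Subtype.ext h)
  have hWτ : W ᵥ* τ = μ • W := by
    have := congrArg (Subtype.val) hwe.apply_eq_smul
    simpa [hf, LinearMap.restrict_apply, Matrix.mulVecLin_apply] using this
  have hWU : ∀ k : ℕ, W ⬝ᵥ ((τ ^ k) *ᵥ v) = 0 := w.2
  have hWlast : W (Fin.last n) = 0 := by
    have := hWU 0
    rw [pow_zero, Matrix.one_mulVec, hv] at this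
    simpa [dotProduct, Pi.single_apply] using this
  have hμτ : μ ∈ spectrum ℂ τ := by
    exact mem_spectrum_of_vecMul τ μ W hW0 hWτ
  set W' : Fin n → ℂ := fun i => W (Fin.castSucc i) with hW'
  have hW'0 : W' ≠ 0 := by
    intro h
    apply hW0
    funext i
    refine Fin.lastCases ?_ ?_ i
    · exact hWlast
    · intro j; exact congrFun h j
  have hW'e : W' ᵥ* (τ.submatrix Fin.castSucc Fin.castSucc) = μ • W' := by
    funext j
    have h1 : (W ᵥ* τ) (Fin.castSucc j) = μ * W (Fin.castSucc j) := by
      rw [hWτ]; simp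
    rw [Matrix.vecMul, dotProduct] at h1 ⊢
    rw [Fin.sum_univ_castSucc] at h1
    simp only [Matrix.submatrix_apply, hW']
    simp only [hWlast, zero_mul, add_zero] at h1
    simpa using h1
  exact hspec μ hμτ (mem_spectrum_of_vecMul _ μ W' hW'0 hW'e)

/-- **Endgame linear algebra theorem.** If no eigenvalue of `τ` is an eigenvalue of its
upper-left `n × n` submatrix `τH`, if `x` commutes with `τ`, and if
`[x,[z,τ]] = [y,τ]` for some `y` in the upper-left block (where
`z = diag(1,…,1,0)`), then `x` is a scalar matrix. -/
theorem stmt0 (n : ℕ) (τ x : Matrix (Fin (n + 1)) (Fin (n + 1)) ℂ)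
    (τH : Matrix (Fin n) (Fin n) ℂ)
    (hτH : τH = τ.submatrix Fin.castSucc Fin.castSucc)
    (hspec : ∀ μ : ℂ, μ ∈ spectrum ℂ τ → μ ∉ spectrum ℂ τH)
    (hxτ : x * τ - τ * x = 0)
    (z : Matrix (Fin (n + 1)) (Fin (n + 1)) ℂ)
    (hz : z = Matrix.diagonal fun i => if i = Fin.last n then 0 else 1)
    (y : Matrix (Fin n) (Fin n) ℂ)
    (yE : Matrix (Fin (n + 1)) (Fin (n + 1)) ℂ)
    (hyE : ∀ i j : Fin (n + 1), yE i j =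
      if hi : (i : ℕ) < n then
        if hj : (j : ℕ) < n then y ⟨i, hi⟩ ⟨j, hj⟩ else 0
      else 0)
    (heq : x * (z * τ - τ * z) - (z * τ - τ * z) * x = yE * τ - τ * yE) :
    ∃ c : ℂ, x = c • (1 : Matrix (Fin (n + 1)) (Fin (n + 1)) ℂ) := by
  rw [hτH] at hspec
  set v : Fin (n + 1) → ℂ := Pi.single (Fin.last n) 1 with hv
  set E : Matrix (Fin (n + 1)) (Fin (n + 1)) ℂ :=
    Matrix.diagonal (fun i => if i = Fin.last n then 1 else 0) with hE
  have hzE : z = 1 - E := by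
    rw [hz, hE, ← Matrix.diagonal_one, Matrix.diagonal_sub]
    refine congrArg Matrix.diagonal (funext fun i => ?_)
    by_cases h : i = Fin.last n <;> simp [h]
  have hcomm : x * τ = τ * x := sub_eq_zero.mp hxτ
  -- w commutes with τ
  set w : Matrix (Fin (n + 1)) (Fin (n + 1)) ℂ := x * E - E * x + yE with hwdef
  have heq' : x * (τ * E - E * τ) - (τ * E - E * τ) * x = yE * τ - τ * yE := by
    have hb : z * τ - τ * z = τ * E - E * τ := by rw [hzE]; noncomm_ring
    rw [← hb]; exact heq
  have hwτ : w * τ = τ * w := by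
    have free : τ * w - w * τ =
        (x * (τ * E - E * τ) - (τ * E - E * τ) * x - (yE * τ - τ * yE)) +
          ((τ * x - x * τ) * E - E * (τ * x - x * τ)) := by
      rw [hwdef]; noncomm_ring
    have h0 : τ * w - w * τ = 0 := by
      rw [free, heq', ← hcomm]
      simp
    exact (sub_eq_zero.mp h0).symm
  set c : ℂ := x (Fin.last n) (Fin.last n) with hc
  set u : Matrix (Fin (n + 1)) (Fin (n + 1)) ℂ := x - c • 1 with hu
  have hxk : ∀ k : ℕ, x * τ ^ k = τ ^ k * x := fun k => Commute.pow_right hcomm k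
  have huk : ∀ k : ℕ, u * τ ^ k = τ ^ k * u := by
    intro k
    rw [hu, sub_mul, mul_sub, hxk k, smul_mul_assoc, mul_smul_comm, one_mul, mul_one]
  have hwk : ∀ k : ℕ, w * τ ^ k = τ ^ k * w := fun k => Commute.pow_right hwτ k
  -- vector facts
  have hEm : ∀ m : Fin (n + 1) → ℂ, E *ᵥ m = m (Fin.last n) • v := by
    intro m; funext i
    rw [hE, Matrix.mulVec_diagonal]
    by_cases h : i = Fin.last n <;> simp [h, hv, Pi.single_apply]
  have hmE : ∀ m : Fin (n + 1) → ℂ, m ᵥ* E = m (Fin.last n) • v := by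
    intro m; funext i
    rw [hE, Matrix.vecMul_diagonal]
    by_cases h : i = Fin.last n <;> simp [h, hv, Pi.single_apply]
  have hyElastcol : ∀ i, yE i (Fin.last n) = 0 := by
    intro i; rw [hyE]; simp
  have hyElastrow : ∀ j, yE (Fin.last n) j = 0 := by
    intro j; rw [hyE]; simp
  have hyEv : yE *ᵥ v = 0 := by
    funext i
    simp [Matrix.mulVec, dotProduct, hv, Pi.single_apply, mul_ite, hyElastcol]
  have hvyE : v ᵥ* yE = 0 := by
    funext j
    simp [Matrix.vecMul, dotProduct, hv, Pi.single_apply, ite_mul, hyElastrow]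
  have hxvlast : (x *ᵥ v) (Fin.last n) = c := by
    simp [Matrix.mulVec, dotProduct, hv, Pi.single_apply, mul_ite, hc]
  have hvxlast : (v ᵥ* x) (Fin.last n) = c := by
    simp [Matrix.vecMul, dotProduct, hv, Pi.single_apply, ite_mul, hc]
  have hEv : E *ᵥ v = v := by
    rw [hEm]; simp [hv]
  have hvE : v ᵥ* E = v := by
    rw [hmE]; simp [hv]
  have huv : w *ᵥ v = u *ᵥ v := by
    rw [hwdef, hu, Matrix.add_mulVec, Matrix.sub_mulVec, Matrix.sub_mulVec,
      ← Matrix.mulVec_mulVec, ← Matrix.mulVec_mulVec, hEv, hEm, hxvlast,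
      Matrix.smul_mulVec, Matrix.one_mulVec, hyEv, add_zero]
  have hsm : ∀ (M : Matrix (Fin (n + 1)) (Fin (n + 1)) ℂ) (a : ℂ) (m : Fin (n + 1) → ℂ),
      m ᵥ* (a • M) = a • (m ᵥ* M) := by
    intro M a m
    rw [← Matrix.mulVec_transpose, Matrix.transpose_smul, Matrix.smul_mulVec,
      Matrix.mulVec_transpose]
  have hvw : v ᵥ* w = -(v ᵥ* u) := by
    rw [hwdef, hu, Matrix.vecMul_add, Matrix.vecMul_sub, Matrix.vecMul_sub,
      ← Matrix.vecMul_vecMul, ← Matrix.vecMul_vecMul, hvE, hmE, hvxlast, hvyE, add_zero,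
      hsm, Matrix.vecMul_one, neg_sub]
  -- spanning hypotheses
  have hcol : Submodule.span ℂ (Set.range fun k : ℕ => (τ ^ k) *ᵥ v) = ⊤ := ctrl n τ hspec
  have hspecT : ∀ μ : ℂ, μ ∈ spectrum ℂ τᵀ →
      μ ∉ spectrum ℂ (τᵀ.submatrix Fin.castSucc Fin.castSucc) := by
    intro μ hμ hμ'
    rw [spectrum_transpose] at hμ
    rw [← Matrix.transpose_submatrix, spectrum_transpose] at hμ'
    exact hspec μ hμ hμ'
  have hrow : Submodule.span ℂ (Set.range fun k : ℕ => (τᵀ ^ k) *ᵥ v) = ⊤ := ctrl n τᵀ hspecT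
  -- the key scalar identity
  have hk : ∀ k : ℕ, (v ᵥ* u) ⬝ᵥ ((τ ^ k) *ᵥ v) = 0 := by
    intro k
    have h1 : (v ᵥ* u) ⬝ᵥ ((τ ^ k) *ᵥ v) = -((v ᵥ* u) ⬝ᵥ ((τ ^ k) *ᵥ v)) := by
      calc (v ᵥ* u) ⬝ᵥ ((τ ^ k) *ᵥ v)
          = v ⬝ᵥ (u *ᵥ ((τ ^ k) *ᵥ v)) := (Matrix.dotProduct_mulVec v u _).symm
        _ = v ⬝ᵥ ((u * τ ^ k) *ᵥ v) := by rw [Matrix.mulVec_mulVec]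
        _ = v ⬝ᵥ ((τ ^ k * u) *ᵥ v) := by rw [huk k]
        _ = v ⬝ᵥ ((τ ^ k) *ᵥ (u *ᵥ v)) := by rw [Matrix.mulVec_mulVec]
        _ = v ⬝ᵥ ((τ ^ k) *ᵥ (w *ᵥ v)) := by rw [huv]
        _ = v ⬝ᵥ ((τ ^ k * w) *ᵥ v) := by rw [Matrix.mulVec_mulVec]
        _ = v ⬝ᵥ ((w * τ ^ k) *ᵥ v) := by rw [hwk k]
        _ = v ⬝ᵥ (w *ᵥ ((τ ^ k) *ᵥ v)) := by rw [Matrix.mulVec_mulVec]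
        _ = (v ᵥ* w) ⬝ᵥ ((τ ^ k) *ᵥ v) := Matrix.dotProduct_mulVec v w _
        _ = (-(v ᵥ* u)) ⬝ᵥ ((τ ^ k) *ᵥ v) := by rw [hvw]
        _ = -((v ᵥ* u) ⬝ᵥ ((τ ^ k) *ᵥ v)) := neg_dotProduct _ _
    linear_combination h1 / 2
  -- v ᵥ* u = 0
  have hvu : v ᵥ* u = 0 := by
    have hall : ∀ m : Fin (n + 1) → ℂ, (v ᵥ* u) ⬝ᵥ m = 0 := by
      intro m
      have hm : m ∈ Submodule.span ℂ (Set.range fun k : ℕ => (τ ^ k) *ᵥ v) := by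
        rw [hcol]; trivial
      induction hm using Submodule.span_induction with
      | mem a h => obtain ⟨k, rfl⟩ := h; exact hk k
      | zero => simp
      | add a b _ _ ha hb => rw [dotProduct_add, ha, hb, add_zero]
      | smul t a _ ha => rw [dotProduct_smul, ha, smul_zero]
    funext i
    have := hall (Pi.single i 1)
    simpa [dotProduct, Pi.single_apply, mul_ite] using this
  -- every row functional kills u
  have hrows : ∀ k : ℕ, ((τᵀ ^ k) *ᵥ v) ᵥ* u = 0 := by
    intro k
    rw [← Matrix.transpose_pow, Matrix.mulVec_transpose, Matrix.vecMul_vecMul, ← huk k,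
      ← Matrix.vecMul_vecMul, hvu, Matrix.zero_vecMul]
  have hu0 : u = 0 := by
    have hall : ∀ m : Fin (n + 1) → ℂ, m ᵥ* u = 0 := by
      intro m
      have hm : m ∈ Submodule.span ℂ (Set.range fun k : ℕ => (τᵀ ^ k) *ᵥ v) := by
        rw [hrow]; trivial
      induction hm using Submodule.span_induction with
      | mem a h => obtain ⟨k, rfl⟩ := h; exact hrows k
      | zero => exact Matrix.zero_vecMul u
      | add a b _ _ ha hb => rw [Matrix.add_vecMul, ha, hb, add_zero]
      | smul t a _ ha => rw [Matrix.smul_vecMul, ha, smul_zero]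
    ext i j
    have := congrFun (hall (Pi.single i 1)) j
    simpa [Matrix.vecMul, dotProduct, Pi.single_apply, ite_mul] using this
  exact ⟨c, sub_eq_zero.mp (hu ▸ hu0)⟩
end

section
/- Let $\tau \in M_{n+1}(\mathbb{C})$ be the standard lower-triangular nilpotent Jordan block (ones on the subdiagonal, zeros elsewhere). Let $\tau_H := 1_H \tau 1_H$ where $1_H = 1 - pq$ with $p = e_1$ and $q = e_1^* + e_{n+1}^*$. Then the eigenvalues of $\tau_H$ acting on the $n$-dimensional space $\ker(q)$ are exactly the $n$-th roots of $-1$, i.e., the solutions of $\mu^n = -1$. -/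
open Matrix

/-- For the standard lower-triangular nilpotent Jordan block `τ` and
`τH = 1_H τ 1_H` with `1_H = 1 - p q`, `p = e₁`, `q = e₁* + e_{n+1}*`, the eigenvalues of
`τH` acting on the `n`-dimensional space `ker q` are exactly the `n`-th roots of `-1`. -/
theorem stmt1 (n : ℕ) (hn : 1 ≤ n)
    (τ oneH τH : Matrix (Fin (n + 1)) (Fin (n + 1)) ℂ)
    (p q : Fin (n + 1) → ℂ)
    (hτ : ∀ i j : Fin (n + 1), τ i j = if (i : ℕ) = (j : ℕ) + 1 then 1 else 0)
    (hp : p = Pi.single 0 1)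
    (hq : q = Pi.single 0 1 + Pi.single (Fin.last n) 1)
    (h1H : oneH = 1 - Matrix.vecMulVec p q)
    (hτH : τH = oneH * τ * oneH) :
    ∀ μ : ℂ,
      (∃ v : Fin (n + 1) → ℂ, v ≠ 0 ∧ q ⬝ᵥ v = 0 ∧ τH.mulVec v = μ • v) ↔ μ ^ n = -1 := by
  obtain ⟨m, rfl⟩ : ∃ m, n = m + 1 := ⟨n - 1, (Nat.succ_pred_eq_of_pos hn).symm⟩
  intro μ
  -- dot product with q
  have hqdot : ∀ v : Fin (m + 2) → ℂ, q ⬝ᵥ v = v 0 + v (Fin.last (m + 1)) := by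
    intro v
    simp [hq, add_dotProduct, single_dotProduct]
  -- mulVec by oneH
  have honeH : ∀ v : Fin (m + 2) → ℂ,
      oneH.mulVec v = v - (v 0 + v (Fin.last (m + 1))) • (Pi.single 0 1 : Fin (m + 2) → ℂ) := by
    intro v
    rw [h1H, sub_mulVec, one_mulVec]
    congr 1
    funext i
    rw [mulVec, dotProduct]
    simp only [vecMulVec_apply]
    rw [Finset.sum_congr rfl (fun j _ => mul_assoc (p i) (q j) (v j)), ← Finset.mul_sum]
    rw [show ∑ j, q j * v j = q ⬝ᵥ v from rfl, hqdot, hp]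
    simp [Pi.single_apply, mul_comm]
  -- mulVec by τ
  have hτ0 : ∀ v : Fin (m + 2) → ℂ, τ.mulVec v 0 = 0 := by
    intro v
    rw [mulVec, dotProduct]
    apply Finset.sum_eq_zero
    intro j _
    rw [hτ]
    simp
  have hτS : ∀ (v : Fin (m + 2) → ℂ) (j : Fin (m + 1)),
      τ.mulVec v j.succ = v j.castSucc := by
    intro v j
    rw [mulVec, dotProduct]
    rw [Finset.sum_eq_single j.castSucc]
    · rw [hτ]; simp
    · intro k _ hk
      rw [hτ]
      have : ¬ ((j.succ : ℕ) = (k : ℕ) + 1) := by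
        intro h
        apply hk
        have : (k : ℕ) = (j.castSucc : ℕ) := by
          simp at h ⊢; omega
        exact Fin.ext this
      rw [if_neg this, zero_mul]
    · intro h; exact absurd (Finset.mem_univ _) h
  -- components of τH.mulVec v assuming q ⬝ᵥ v = 0
  have hcomp : ∀ v : Fin (m + 2) → ℂ, v 0 + v (Fin.last (m + 1)) = 0 →
      (τH.mulVec v 0 = -(v ((Fin.last m).castSucc)) ∧
       ∀ j : Fin (m + 1), τH.mulVec v j.succ = v j.castSucc) := by
    intro v hv
    have h1 : oneH.mulVec v = v := by rw [honeH, hv]; simp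
    have h2 : τH.mulVec v = oneH.mulVec (τ.mulVec v) := by
      rw [hτH, ← mulVec_mulVec, ← mulVec_mulVec, h1]
    have hlast : τ.mulVec v (Fin.last (m + 1)) = v ((Fin.last m).castSucc) := by
      rw [← Fin.succ_last, hτS]
    rw [h2, honeH (τ.mulVec v)]
    constructor
    · simp [hτ0, hlast]
    · intro j
      simp [hτS, hlast, hτ0, Pi.single_apply, Fin.succ_ne_zero]
  constructor
  · rintro ⟨v, hv0, hqv, heig⟩
    rw [hqdot] at hqv
    obtain ⟨h0, hS⟩ := hcomp v hqv
    have hstep : ∀ j : Fin (m + 1), v j.castSucc = μ * v j.succ := by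
      intro j
      have := congrFun heig j.succ
      rw [hS j] at this
      simpa using this
    have hpow : ∀ i : Fin (m + 2), v 0 = μ ^ (i : ℕ) * v i := by
      intro i
      induction i using Fin.induction with
      | zero => simp
      | succ j ih =>
        rw [ih, hstep j]
        simp [pow_succ]
        ring
    have hlastpow : v 0 = μ ^ (m + 1) * v (Fin.last (m + 1)) := by
      simpa using hpow (Fin.last (m + 1))
    have hvlast : v (Fin.last (m + 1)) = -(v 0) := by linear_combination hqv
    by_cases hv00 : v 0 = 0
    · exfalso
      apply hv0
      funext i
      by_cases hμ : μ = 0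
      · induction i using Fin.lastCases with
        | last => rw [hvlast, hv00, neg_zero]; rfl
        | cast j => rw [hstep j, hμ, zero_mul]; rfl
      · have := hpow i
        rw [hv00] at this
        have := this.symm
        rcases mul_eq_zero.mp this with h | h
        · exact absurd (pow_eq_zero_iff'.mp h).1 hμ
        · rw [h]; rfl
    · have : (1 + μ ^ (m + 1)) * v 0 = 0 := by
        rw [hvlast] at hlastpow
        linear_combination hlastpow
      rcases mul_eq_zero.mp this with h | h
      · linear_combination h
      · exact absurd h hv00
  · intro hμ
    have hμ0 : μ ≠ 0 := by
      intro h
      rw [h, zero_pow (by omega)] at hμ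
      exact absurd hμ (by norm_num)
    set v : Fin (m + 2) → ℂ := fun i => μ ^ (m + 1 - (i : ℕ)) with hvdef
    have hqv : v 0 + v (Fin.last (m + 1)) = 0 := by
      simp [hvdef, hμ]
    refine ⟨v, ?_, ?_, ?_⟩
    · intro h
      have := congrFun h (Fin.last (m + 1))
      simp [hvdef] at this
    · rw [hqdot]; exact hqv
    · obtain ⟨h0, hS⟩ := hcomp v hqv
      funext i
      induction i using Fin.cases with
      | zero =>
        rw [h0]
        simp only [Pi.smul_apply, smul_eq_mul, hvdef, Fin.coe_castSucc, Fin.val_last,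
          Fin.val_zero, Nat.sub_zero, Nat.add_sub_cancel_left]
        rw [hμ, pow_one]
        ring
      | succ j =>
        rw [hS j]
        simp only [Pi.smul_apply, smul_eq_mul, hvdef, Fin.coe_castSucc, Fin.val_succ]
        rw [show m + 1 - (j : ℕ) = (m - (j : ℕ)) + 1 from by omega,
          show m + 1 - ((j : ℕ) + 1) = m - (j : ℕ) from by omega, pow_succ]
        ring
end

section
/- Let $\tau \in M_{n+1}(\mathbb{C})$ be such that the minimal polynomial of $\tau$ has degree at most $n$ (i.e., $\tau$ is not regular). Then $\det D(\tau) = 0$, where $D(\tau)_{ij} = \mathrm{tr}([1_H,[\tau^i, \tau_H^{j-1}]]\,\tau)$. -/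
open Matrix

/-- `1_H = diag(1,…,1,0)` as an `(n+1) × (n+1)` complex matrix. -/
noncomputable def oneHmat (n : ℕ) : Matrix (Fin (n + 1)) (Fin (n + 1)) ℂ :=
  Matrix.diagonal fun i => if i = Fin.last n then 0 else 1

/-- `τ_H := 1_H τ 1_H`, as an `(n+1) × (n+1)` matrix. -/
noncomputable def tauHmat (n : ℕ) (τ : Matrix (Fin (n + 1)) (Fin (n + 1)) ℂ) :
    Matrix (Fin (n + 1)) (Fin (n + 1)) ℂ :=
  oneHmat n * τ * oneHmat n

/-- The `n × n` matrix `D(τ)` with (1-based) entries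
`D(τ)_{ij} = tr([1_H, [τ^i, τ_H^{j-1}]] τ)`, where `τ_H^{j-1} := 1_H (τ_H)^{j-1}`. -/
noncomputable def Dmat (n : ℕ) (τ : Matrix (Fin (n + 1)) (Fin (n + 1)) ℂ) :
    Matrix (Fin n) (Fin n) ℂ :=
  Matrix.of fun i j : Fin n =>
    Matrix.trace
      ((oneHmat n *
            (τ ^ ((i : ℕ) + 1) * (oneHmat n * tauHmat n τ ^ (j : ℕ)) -
              (oneHmat n * tauHmat n τ ^ (j : ℕ)) * τ ^ ((i : ℕ) + 1)) -
          (τ ^ ((i : ℕ) + 1) * (oneHmat n * tauHmat n τ ^ (j : ℕ)) -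
              (oneHmat n * tauHmat n τ ^ (j : ℕ)) * τ ^ ((i : ℕ) + 1)) * oneHmat n) * τ)

/-! Some nontrivial combination of `τ, …, τⁿ` is scalar, and scalars commute with everything, so
they are killed by each column functional `x ↦ tr([1_H, [x, τ_H^{j-1}]] τ)`; hence the rows of
`D(τ)` are linearly dependent. -/

theorem minpoly.exists_sum_pow_succ_eq_algebraMap {K A : Type*} [Field K] [Ring A]
    [Nontrivial A] [Algebra K A] {a : A} (ha : IsIntegral K a) {n : ℕ}
    (hdeg : (minpoly K a).natDegree ≤ n) :
    ∃ c : Fin n → K, c ≠ 0 ∧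
      ∑ i : Fin n, c i • a ^ ((i : ℕ) + 1) = algebraMap K A (-(minpoly K a).coeff 0) := by
  set p := minpoly K a
  have hpos : 0 < p.natDegree := minpoly.natDegree_pos ha
  refine ⟨fun i => p.coeff ((i : ℕ) + 1), fun hc => ?_, ?_⟩
  · have hlead := congrFun hc ⟨p.natDegree - 1, by omega⟩
    simp only [Nat.sub_add_cancel hpos, Pi.zero_apply] at hlead
    exact one_ne_zero ((minpoly.monic ha).coeff_natDegree ▸ hlead)
  · have hsum : ∑ k ∈ Finset.range (n + 1), p.coeff k • a ^ k = 0 := by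
      rw [← Polynomial.aeval_eq_sum_range' (by omega), minpoly.aeval]
    rw [Finset.sum_range_succ', pow_zero] at hsum
    rw [Fin.sum_univ_eq_sum_range (fun k => p.coeff (k + 1) • a ^ (k + 1)), map_neg,
      Algebra.algebraMap_eq_smul_one, eq_neg_iff_add_eq_zero, hsum]

theorem Matrix.det_of_linearMap_apply_eq_zero {K V ι : Type*} [Field K] [AddCommGroup V]
    [Module K V] [Fintype ι] [DecidableEq ι] (f : ι → V →ₗ[K] K) (x : ι → V) {c : ι → K}
    (hc : c ≠ 0) (hker : ∀ j, f j (∑ i, c i • x i) = 0) :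
    (Matrix.of fun i j => f j (x i)).det = 0 := by
  rw [← Matrix.exists_vecMul_eq_zero_iff]
  refine ⟨c, hc, funext fun j => ?_⟩
  simpa [Matrix.vecMul, dotProduct, map_sum] using hker j

section TraceDoubleCommutator

variable {m R : Type*} [Fintype m] [DecidableEq m] [CommRing R]

noncomputable def Matrix.traceDoubleCommutator (P M T : Matrix m m R) :
    Matrix m m R →ₗ[R] R :=
  traceLinearMap m R R ∘ₗ LinearMap.mulRight R T ∘ₗ
    (LinearMap.mulLeft R P - LinearMap.mulRight R P) ∘ₗ
      (LinearMap.mulRight R M - LinearMap.mulLeft R M)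

theorem Matrix.traceDoubleCommutator_apply (P M T x : Matrix m m R) :
    traceDoubleCommutator P M T x = trace ((P * (x * M - M * x) - (x * M - M * x) * P) * T) :=
  rfl

theorem Matrix.traceDoubleCommutator_algebraMap (P M T : Matrix m m R) (r : R) :
    traceDoubleCommutator P M T (algebraMap R _ r) = 0 := by
  simp [traceDoubleCommutator_apply, Algebra.commutes r M]

end TraceDoubleCommutator

theorem Dmat_eq_traceDoubleCommutator (n : ℕ) (τ : Matrix (Fin (n + 1)) (Fin (n + 1)) ℂ) :
    Dmat n τ = Matrix.of fun i j : Fin n =>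
      traceDoubleCommutator (oneHmat n) (oneHmat n * tauHmat n τ ^ (j : ℕ)) τ
        (τ ^ ((i : ℕ) + 1)) :=
  rfl

/-- If the minimal polynomial of `τ` has degree at most `n` (i.e. `τ` is not regular),
then `det D(τ) = 0`. -/
theorem stmt7 (n : ℕ) (τ : Matrix (Fin (n + 1)) (Fin (n + 1)) ℂ)
    (hmin : (minpoly ℂ τ).natDegree ≤ n) :
    (Dmat n τ).det = 0 := by
  obtain ⟨c, hc, hscalar⟩ :=
    minpoly.exists_sum_pow_succ_eq_algebraMap (Algebra.IsIntegral.isIntegral τ) hmin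
  rw [Dmat_eq_traceDoubleCommutator]
  exact det_of_linearMap_apply_eq_zero _ _ hc fun j => by
    rw [hscalar, traceDoubleCommutator_algebraMap]
end

section
/- Let $w : \mathbb{R} \to \mathbb{C}$ be smooth with support in $[\alpha,\beta]$ satisfying $|w^{(j)}(t)| \le C_j X U^{-j}$ for all $j \ge 0$, and let $\Phi : [\alpha,\beta] \to \mathbb{R}$ be smooth with $|\Phi'(t)| \ge R > 0$ and $|\Phi^{(j)}(t)| \le C_j' Y Q^{-j}$ for $j \ge 2$, where $Y \ge 1$ and $X, Q, U, R > 0$. Then for every $A \ge 0$ there is a constant $C(A, (C_j), (C_j'))$ with $\left|\int_{\mathbb{R}} w(t)e^{i\Phi(t)}\,dt\right| \le C(\beta-\alpha)\,X\,\left[(QR/\sqrt{Y})^{-A} + (RU)^{-A}\right]$. -/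
/-!
Integrate by parts `n = ⌈A⌉` times, each time writing `w e^{iΦ} = (w / Φ') · (e^{iΦ})' / i`.
With the common scale `V = min U (Q / √Y)` the phase satisfies `|Φ^{(j)}| ≪ V^{-j}` for `j ≥ 2`,
and as long as `R V ≥ 1` the Leibniz rule applied to `(1/Φ') · Φ' = 1` gives
`|(1/Φ')^{(k)}| ≪ R^{-1} V^{-k}`. Hence one integration by parts turns a weight with
`|w^{(j)}| ≪ M V^{-j}` into one with `|w₁^{(j)}| ≪ (M / (R V)) V^{-j}`, gaining a factor
`(R V)^{-1}`. After `n` steps the trivial bound gives `(β - α) X (R V)^{-n}`; when `R V < 1` the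
trivial bound alone suffices. Since `R V = min (R U) (Q R / √Y)`, both cases are bounded by the
claimed sum.
-/

open MeasureTheory Real Set
open scoped ContDiff

theorem norm_iteratedDeriv_smul_le {𝕜 F : Type*} [NontriviallyNormedField 𝕜]
    [NormedAddCommGroup F] [NormedSpace 𝕜 F] {f : 𝕜 → 𝕜} {g : 𝕜 → F} {x : 𝕜} {n : ℕ}
    (hf : ContDiffAt 𝕜 n f x) (hg : ContDiffAt 𝕜 n g x) {a b : ℕ → ℝ}
    (ha : ∀ k ≤ n, ‖iteratedDeriv k f x‖ ≤ a k) (hb : ∀ k ≤ n, ‖iteratedDeriv k g x‖ ≤ b k) :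
    ‖iteratedDeriv n (fun y => f y • g y) x‖ ≤
      ∑ k ∈ Finset.range (n + 1), n.choose k * (a k * b (n - k)) := by
  have hleibniz := iteratedDerivWithin_smul (mem_univ x) uniqueDiffOn_univ
    hf.contDiffWithinAt hg.contDiffWithinAt
  simp only [iteratedDerivWithin_univ] at hleibniz
  rw [show (fun y => f y • g y) = f • g from rfl, hleibniz]
  refine (norm_sum_le _ _).trans (Finset.sum_le_sum fun k hk => ?_)
  have hkn : k ≤ n := Nat.lt_succ_iff.mp (Finset.mem_range.mp hk)
  refine norm_nsmul_le.trans (mul_le_mul_of_nonneg_left ?_ (Nat.cast_nonneg _))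
  rw [norm_smul]
  exact mul_le_mul (ha k hkn) (hb (n - k) (Nat.sub_le n k)) (norm_nonneg _)
    ((norm_nonneg _).trans (ha k hkn))

-- `invDerivConst E k` bounds `R V ^ k |(1 / Φ')^{(k)}|`; the recursion is Leibniz's rule
-- for `(1 / Φ') Φ' = 1`.
def invDerivConst (E : ℕ → ℝ) : ℕ → ℝ
  | 0 => 1
  | k + 1 => ∑ j : Fin (k + 1), (k + 1).choose j * invDerivConst E j * E (k + 1 - j + 1)

theorem invDerivConst_succ (E : ℕ → ℝ) (k : ℕ) : invDerivConst E (k + 1) =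
    ∑ j ∈ Finset.range (k + 1), (k + 1).choose j * invDerivConst E j * E (k + 1 - j + 1) := by
  rw [invDerivConst]
  exact Fin.sum_univ_eq_sum_range
    (fun j => ((k + 1).choose j : ℝ) * invDerivConst E j * E (k + 1 - j + 1)) _

theorem iteratedDeriv_succ_inv_mul_eq_neg_sum {𝕜 : Type*} [NontriviallyNormedField 𝕜]
    {h : 𝕜 → 𝕜} {t : 𝕜} {k : ℕ} (hh : ContDiffAt 𝕜 (k + 1 : ℕ) h t) (ht : h t ≠ 0) :
    iteratedDeriv (k + 1) (fun s => (h s)⁻¹) t * h t = -∑ i ∈ Finset.range (k + 1),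
      (k + 1).choose i * iteratedDeriv i (fun s => (h s)⁻¹) t * iteratedDeriv (k + 1 - i) h t := by
  have hone : (fun s => (h s)⁻¹ * h s) =ᶠ[nhds t] fun _ => 1 := by
    filter_upwards [hh.continuousAt.eventually_ne ht] with s hs
    exact inv_mul_cancel₀ hs
  have hinv : ContDiffAt 𝕜 (k + 1 : ℕ) (fun s => (h s)⁻¹) t := hh.inv ht
  have h0 := (hone.iteratedDeriv_eq (k + 1)).symm
  rw [iteratedDeriv_const, if_neg k.succ_ne_zero, iteratedDeriv_fun_mul hinv hh,
    Finset.sum_range_succ] at h0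
  simp only [Nat.choose_self, Nat.cast_one, one_mul, Nat.sub_self, iteratedDeriv_zero] at h0
  linear_combination -h0

theorem abs_iteratedDeriv_inv_deriv_le {Φ : ℝ → ℝ} {E : ℕ → ℝ} {R V t : ℝ}
    (hΦ : ContDiff ℝ ∞ Φ) (hR : 0 < R) (hV : 0 < V) (hRV : 1 ≤ R * V) (hΦ't : R ≤ |deriv Φ t|)
    (hΦm : ∀ m, 2 ≤ m → |iteratedDeriv m Φ t| ≤ E m / V ^ m) (k : ℕ) :
    |iteratedDeriv k (fun s => (deriv Φ s)⁻¹) t| ≤ invDerivConst E k / (R * V ^ k) := by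
  have hΦ' : ContDiff ℝ ∞ (deriv Φ) := (contDiff_infty_iff_deriv.mp hΦ).2
  have ht : deriv Φ t ≠ 0 := abs_pos.mp (hR.trans_le hΦ't)
  induction k using Nat.strong_induction_on with
  | _ k ih =>
  rcases k with _ | k
  · simpa [invDerivConst, abs_inv] using inv_anti₀ hR hΦ't
  set g : ℝ → ℝ := fun s => (deriv Φ s)⁻¹
  have hleibniz := iteratedDeriv_succ_inv_mul_eq_neg_sum (k := k)
    ((hΦ'.of_le (mod_cast le_top)).contDiffAt (x := t)) ht
  simp only [← iteratedDeriv_succ'] at hleibniz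
  have hsum : |iteratedDeriv (k + 1) g t * deriv Φ t| ≤
      invDerivConst E (k + 1) / (R * V ^ (k + 2)) := by
    rw [hleibniz, abs_neg, invDerivConst_succ, Finset.sum_div]
    refine (Finset.abs_sum_le_sum_abs _ _).trans (Finset.sum_le_sum fun i hi => ?_)
    have hik : i < k + 1 := Finset.mem_range.mp hi
    have h1 := ih i hik
    have h2 := hΦm (k + 1 - i + 1) (by omega)
    rw [abs_mul, abs_mul, Nat.abs_cast, show R * V ^ (k + 2) = R * V ^ i * V ^ (k + 1 - i + 1) by
      rw [mul_assoc, ← pow_add]; congr 2; omega]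
    calc _ ≤ (k + 1).choose i * (invDerivConst E i / (R * V ^ i)) *
          (E (k + 1 - i + 1) / V ^ (k + 1 - i + 1)) := by
          gcongr
          exact mul_nonneg (Nat.cast_nonneg _) ((abs_nonneg _).trans h1)
      _ = _ := by field_simp
  have hc : 0 ≤ invDerivConst E (k + 1) := by
    simpa using (le_div_iff₀ (by positivity)).mp ((abs_nonneg _).trans hsum)
  rw [abs_mul] at hsum
  calc |iteratedDeriv (k + 1) g t|
      ≤ invDerivConst E (k + 1) / (R * V ^ (k + 2)) / R := by
        rw [le_div_iff₀ hR]; exact (mul_le_mul_of_nonneg_left hΦ't (abs_nonneg _)).trans hsum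
    _ ≤ invDerivConst E (k + 1) / (R * V ^ (k + 1)) := by
        rw [div_div]
        refine div_le_div_of_nonneg_left hc (by positivity) ?_
        rw [show R * V ^ (k + 2) * R = R * V ^ (k + 1) * (R * V) by ring]
        exact le_mul_of_one_le_right (by positivity) hRV

theorem contDiff_smul_of_support_subset {𝕜 E F : Type*} [NontriviallyNormedField 𝕜]
    [NormedAddCommGroup E] [NormedSpace 𝕜 E] [NormedAddCommGroup F] [NormedSpace 𝕜 F]
    {n : WithTop ℕ∞} {K : Set E} (hK : IsClosed K) {g : E → 𝕜} {w : E → F}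
    (hg : ∀ x ∈ K, ContDiffAt 𝕜 n g x) (hw : ContDiff 𝕜 n w) (hsupp : Function.support w ⊆ K) :
    ContDiff 𝕜 n (fun x => g x • w x) := by
  refine contDiff_iff_contDiffAt.mpr fun x => ?_
  by_cases hx : x ∈ K
  · exact (hg x hx).smul hw.contDiffAt
  · refine (contDiffAt_const (c := (0 : F))).congr_of_eventuallyEq ?_
    filter_upwards [hK.isOpen_compl.mem_nhds hx] with y hy
    rw [Function.notMem_support.mp fun h => hy (hsupp h), smul_zero]

theorem integral_mul_deriv_cexp {u : ℝ → ℂ} {Φ : ℝ → ℝ} (hu : ContDiff ℝ 1 u)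
    (hc : HasCompactSupport u) (hΦ : ContDiff ℝ 1 Φ) :
    ∫ t, u t * (Complex.I * deriv Φ t * Complex.exp (Complex.I * Φ t)) =
      -∫ t, deriv u t * Complex.exp (Complex.I * Φ t) := by
  have hv : Continuous fun t => Complex.exp (Complex.I * Φ t) := by fun_prop
  have hv' : ∀ t, HasDerivAt (fun t => Complex.exp (Complex.I * Φ t))
      (Complex.I * deriv Φ t * Complex.exp (Complex.I * Φ t)) t := by
    intro t
    have := (((hΦ.differentiable one_ne_zero t).hasDerivAt.ofReal_comp).const_mul Complex.I).cexp
    simpa [mul_comm, mul_left_comm] using this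
  refine integral_mul_deriv_eq_deriv_mul_of_integrable
    (fun t _ => (hu.differentiable one_ne_zero t).hasDerivAt) (fun t _ => hv' t) ?_ ?_ ?_
  · exact (hu.continuous.mul (by fun_prop)).integrable_of_hasCompactSupport (hc.mul_right)
  · exact ((hu.continuous_deriv le_rfl).mul hv).integrable_of_hasCompactSupport hc.deriv.mul_right
  · exact (hu.continuous.mul hv).integrable_of_hasCompactSupport hc.mul_right

theorem integral_mul_cexp_eq_I_mul {w : ℝ → ℂ} {Φ : ℝ → ℝ} {α β : ℝ}
    (hsupp : Function.support w ⊆ Icc α β) (hΦ : ContDiff ℝ 1 Φ)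
    (hΦ' : ∀ t ∈ Icc α β, deriv Φ t ≠ 0) (hu : ContDiff ℝ 1 fun s => (deriv Φ s)⁻¹ • w s) :
    ∫ t, w t * Complex.exp (Complex.I * Φ t) = Complex.I *
      ∫ t, deriv (fun s => (deriv Φ s)⁻¹ • w s) t * Complex.exp (Complex.I * Φ t) := by
  set u : ℝ → ℂ := fun s => (deriv Φ s)⁻¹ • w s
  have hwu : ∀ t, w t = u t * deriv Φ t := by
    intro t
    by_cases ht : t ∈ Icc α β
    · have : ((deriv Φ t : ℝ) : ℂ) ≠ 0 := Complex.ofReal_ne_zero.mpr (hΦ' t ht)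
      simp only [u, Complex.real_smul, Complex.ofReal_inv]
      field_simp
    · simp [u, Function.notMem_support.mp fun h => ht (hsupp h)]
  have hc : HasCompactSupport u := by
    refine HasCompactSupport.intro (isCompact_Icc (a := α) (b := β)) fun t ht => ?_
    simp [u, Function.notMem_support.mp fun h => ht (hsupp h)]
  calc ∫ t, w t * Complex.exp (Complex.I * Φ t)
      = -Complex.I * ∫ t, u t * (Complex.I * deriv Φ t * Complex.exp (Complex.I * Φ t)) := by
        rw [← integral_const_mul]
        congr 1 with t
        rw [hwu t]
        linear_combination
          (u t * ((deriv Φ t : ℝ) : ℂ) * Complex.exp (Complex.I * Φ t)) * Complex.I_mul_I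
    _ = _ := by
        rw [integral_mul_deriv_cexp hu hc hΦ]
        ring

theorem norm_integral_mul_cexp_le {w : ℝ → ℂ} {Φ : ℝ → ℝ} {α β B : ℝ} (hab : α ≤ β)
    (hsupp : Function.support w ⊆ Icc α β) (hB : ∀ t ∈ Icc α β, ‖w t‖ ≤ B) :
    ‖∫ t, w t * Complex.exp (Complex.I * Φ t)‖ ≤ (β - α) * B := by
  rw [← setIntegral_eq_integral_of_forall_compl_eq_zero fun t ht => by
    rw [Function.notMem_support.mp fun h => ht (hsupp h), zero_mul]]
  refine (norm_setIntegral_le_of_norm_le_const (C := B) measure_Icc_lt_top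
    fun t ht => ?_).trans_eq ?_
  · simpa [Complex.norm_exp_I_mul_ofReal] using hB t ht
  · rw [Real.volume_real_Icc_of_le hab, mul_comm]

-- derivative constants of the weight `(w / Φ')'` left after one integration by parts
def ibpWeightConst (E D : ℕ → ℝ) (j : ℕ) : ℝ :=
  ∑ k ∈ Finset.range (j + 2), (j + 1).choose k * (invDerivConst E k * D (j + 1 - k))

theorem norm_iteratedDeriv_deriv_inv_deriv_smul_le {w : ℝ → ℂ} {Φ : ℝ → ℝ} {D E : ℕ → ℝ}
    {M R V t : ℝ} (hw : ContDiff ℝ ∞ w) (hΦ : ContDiff ℝ ∞ Φ) (hR : 0 < R) (hV : 0 < V)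
    (hRV : 1 ≤ R * V) (hΦ't : R ≤ |deriv Φ t|)
    (hΦm : ∀ m, 2 ≤ m → |iteratedDeriv m Φ t| ≤ E m / V ^ m)
    (hwD : ∀ j, ‖iteratedDeriv j w t‖ ≤ D j * M / V ^ j) (j : ℕ) :
    ‖iteratedDeriv j (deriv fun s => (deriv Φ s)⁻¹ • w s) t‖ ≤
      ibpWeightConst E D j * (M / (R * V)) / V ^ j := by
  have hΦ' : ContDiffAt ℝ (j + 1 : ℕ) (deriv Φ) t :=
    ((contDiff_infty_iff_deriv.mp hΦ).2.of_le (mod_cast le_top)).contDiffAt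
  have hg : ContDiffAt ℝ (j + 1 : ℕ) (fun s => (deriv Φ s)⁻¹) t :=
    hΦ'.inv (abs_pos.mp (hR.trans_le hΦ't))
  rw [← iteratedDeriv_succ']
  refine (norm_iteratedDeriv_smul_le hg (hw.of_le (mod_cast le_top)).contDiffAt
    (fun k _ => (Real.norm_eq_abs _).trans_le
      (abs_iteratedDeriv_inv_deriv_le hΦ hR hV hRV hΦ't hΦm k)) (fun k _ => hwD k)).trans_eq ?_
  rw [ibpWeightConst, Finset.sum_mul, Finset.sum_div]
  refine Finset.sum_congr rfl fun k hk => ?_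
  have hV' : V * V ^ j = V ^ k * V ^ (j + 1 - k) := by
    rw [← pow_add, ← pow_succ']; congr 1; have := Finset.mem_range.mp hk; omega
  field_simp
  rw [mul_assoc _ V, hV']
  ring

def ibpConst (E : ℕ → ℝ) : ℕ → (ℕ → ℝ) → ℝ
  | 0, D => D 0
  | n + 1, D => ibpConst E n (ibpWeightConst E D)

theorem norm_integral_mul_cexp_le_ibpConst (E : ℕ → ℝ) (n : ℕ) {D : ℕ → ℝ} {α β M V R : ℝ}
    {w : ℝ → ℂ} {Φ : ℝ → ℝ} (hV : 0 < V) (hR : 0 < R) (hRV : 1 ≤ R * V) (hab : α ≤ β)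
    (hw : ContDiff ℝ ∞ w) (hsupp : Function.support w ⊆ Icc α β)
    (hwD : ∀ j, ∀ t ∈ Icc α β, ‖iteratedDeriv j w t‖ ≤ D j * M / V ^ j)
    (hΦ : ContDiff ℝ ∞ Φ) (hΦR : ∀ t ∈ Icc α β, R ≤ |deriv Φ t|)
    (hΦm : ∀ m, 2 ≤ m → ∀ t ∈ Icc α β, |iteratedDeriv m Φ t| ≤ E m / V ^ m) :
    ‖∫ t, w t * Complex.exp (Complex.I * Φ t)‖ ≤ ibpConst E n D * (β - α) * M / (R * V) ^ n := by
  induction n generalizing D M w with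
  | zero =>
    refine (norm_integral_mul_cexp_le hab hsupp (hwD 0)).trans_eq ?_
    simp only [ibpConst, pow_zero, div_one]
    ring
  | succ n ih =>
    have hΦ' : ∀ t ∈ Icc α β, deriv Φ t ≠ 0 := fun t ht => abs_pos.mp (hR.trans_le (hΦR t ht))
    have hu : ContDiff ℝ ∞ fun s => (deriv Φ s)⁻¹ • w s := contDiff_smul_of_support_subset
      isClosed_Icc (fun t ht => (contDiff_infty_iff_deriv.mp hΦ).2.contDiffAt.inv (hΦ' t ht))
      hw hsupp
    have hsupp' : Function.support (deriv fun s => (deriv Φ s)⁻¹ • w s) ⊆ Icc α β :=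
      support_deriv_subset.trans (closure_minimal
        ((Function.support_smul_subset_right (fun s => (deriv Φ s)⁻¹) w).trans hsupp)
        isClosed_Icc)
    rw [integral_mul_cexp_eq_I_mul hsupp (hΦ.of_le (mod_cast le_top)) hΦ'
      (hu.of_le (mod_cast le_top)), norm_mul, Complex.norm_I, one_mul]
    refine (ih (M := M / (R * V)) (contDiff_infty_iff_deriv.mp hu).2 hsupp'
      (fun j t ht => norm_iteratedDeriv_deriv_inv_deriv_smul_le hw hΦ hR hV hRV (hΦR t ht)
        (fun m hm => hΦm m hm t ht) (fun k => hwD k t ht) j)).trans_eq ?_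
    rw [ibpConst, pow_succ]
    field_simp

theorem norm_integral_mul_cexp_le_rpow_neg (D E : ℕ → ℝ) {A : ℝ} (hA : 0 ≤ A)
    {α β M V R : ℝ} {w : ℝ → ℂ} {Φ : ℝ → ℝ} (hM : 0 ≤ M) (hV : 0 < V) (hR : 0 < R)
    (hab : α ≤ β) (hw : ContDiff ℝ ∞ w) (hsupp : Function.support w ⊆ Icc α β)
    (hwD : ∀ j, ∀ t ∈ Icc α β, ‖iteratedDeriv j w t‖ ≤ D j * M / V ^ j)
    (hΦ : ContDiff ℝ ∞ Φ) (hΦR : ∀ t ∈ Icc α β, R ≤ |deriv Φ t|)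
    (hΦm : ∀ m, 2 ≤ m → ∀ t ∈ Icc α β, |iteratedDeriv m Φ t| ≤ E m / V ^ m) :
    ‖∫ t, w t * Complex.exp (Complex.I * Φ t)‖ ≤
      (|D 0| + |ibpConst E ⌈A⌉₊ D|) * (β - α) * M * (R * V) ^ (-A) := by
  have hba : 0 ≤ β - α := sub_nonneg.mpr hab
  rcases le_or_gt 1 (R * V) with hRV | hRV
  · calc _ ≤ ibpConst E ⌈A⌉₊ D * (β - α) * M / (R * V) ^ ⌈A⌉₊ :=
          norm_integral_mul_cexp_le_ibpConst E ⌈A⌉₊ hV hR hRV hab hw hsupp hwD hΦ hΦR hΦm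
      _ ≤ |ibpConst E ⌈A⌉₊ D| * (β - α) * M * (R * V) ^ (-A) := by
          rw [div_eq_mul_inv, ← Real.rpow_natCast, ← Real.rpow_neg (by positivity)]
          gcongr
          · exact le_abs_self _
          · exact Nat.le_ceil A
      _ ≤ _ := by gcongr; exact le_add_of_nonneg_left (abs_nonneg _)
  · calc _ ≤ (β - α) * (D 0 * M / V ^ 0) := norm_integral_mul_cexp_le hab hsupp (hwD 0)
      _ = D 0 * (β - α) * M * 1 := by ring
      _ ≤ |D 0| * (β - α) * M * (R * V) ^ (-A) := by
          gcongr
          · exact le_abs_self _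
          · exact Real.one_le_rpow_of_pos_of_le_one_of_nonpos (by positivity) hRV.le
              (neg_nonpos.mpr hA)
      _ ≤ _ := by gcongr; exact le_add_of_nonneg_right (abs_nonneg _)

theorem le_mul_of_le_mul_of_le {a b b' c : ℝ} (h : a ≤ c * b) (ha : 0 ≤ a) (hb : 0 < b)
    (hbb' : b ≤ b') : a ≤ c * b' :=
  h.trans (mul_le_mul_of_nonneg_left hbb' (nonneg_of_mul_nonneg_left (ha.trans h) hb))

theorem le_div_pow_of_le_mul_zpow_neg {a c U V : ℝ} {j : ℕ} (h : a ≤ c * U ^ (-(j : ℤ)))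
    (ha : 0 ≤ a) (hV : 0 < V) (hVU : V ≤ U) : a ≤ c / V ^ j := by
  rw [div_eq_mul_inv]
  refine le_mul_of_le_mul_of_le h ha (zpow_pos (hV.trans_le hVU) _) ?_
  rw [zpow_neg, zpow_natCast]
  exact inv_anti₀ (pow_pos hV j) (pow_le_pow_left₀ hV.le hVU j)

theorem le_div_pow_of_le_mul_mul_zpow_neg {a c Y Q V : ℝ} {m : ℕ}
    (h : a ≤ c * Y * Q ^ (-(m : ℤ))) (ha : 0 ≤ a) (hY : 1 ≤ Y) (hV : 0 < V)
    (hVQ : V ≤ Q / √Y) (hm : 2 ≤ m) : a ≤ c / V ^ m := by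
  have hYm : Y ≤ √Y ^ m := calc
    Y = √Y ^ 2 := (Real.sq_sqrt (zero_le_one.trans hY)).symm
    _ ≤ √Y ^ m := pow_le_pow_right₀ (Real.one_le_sqrt.mpr hY) hm
  have hQ : 0 < Q :=
    (div_pos_iff_of_pos_right (Real.sqrt_pos.mpr (by linarith))).mp (hV.trans_le hVQ)
  rw [mul_assoc] at h
  rw [div_eq_mul_inv]
  refine le_mul_of_le_mul_of_le h ha (by positivity) ?_
  calc Y * Q ^ (-(m : ℤ)) = Y * (Q ^ m)⁻¹ := by rw [zpow_neg, zpow_natCast]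
    _ ≤ √Y ^ m * (Q ^ m)⁻¹ := by gcongr
    _ = (Q / √Y)⁻¹ ^ m := by rw [inv_div, div_pow, div_eq_mul_inv]
    _ ≤ V⁻¹ ^ m := by gcongr
    _ = (V ^ m)⁻¹ := inv_pow V m

theorem min_rpow_neg_le_add {a b : ℝ} (ha : 0 < a) (hb : 0 < b) (A : ℝ) :
    min a b ^ (-A) ≤ b ^ (-A) + a ^ (-A) := by
  rcases min_choice a b with h | h <;> rw [h]
  · exact le_add_of_nonneg_left (Real.rpow_nonneg hb.le _)
  · exact le_add_of_nonneg_right (Real.rpow_nonneg ha.le _)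

/-- **Integration by parts / stationary phase lemma** (Blomer–Khan–Young, Lemma 8.1).
If `w` is smooth and supported in `[α,β]` with `|w^{(j)}| ≤ C_j X U^{-j}`, and `Φ` is a
smooth real phase with `|Φ'| ≥ R` and `|Φ^{(j)}| ≤ C'_j Y Q^{-j}` for `j ≥ 2` on `[α,β]`,
where `Y ≥ 1` and `X, Q, U, R > 0`, then for every `A ≥ 0` there is a constant `C`
(depending only on `A` and the constants `C_j, C'_j`) with
`|∫ w(t) e^{iΦ(t)} dt| ≤ C (β-α) X [(QR/√Y)^{-A} + (RU)^{-A}]`. -/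
theorem stmt10 (Cw CΦ : ℕ → ℝ) (A : ℝ) (hA : 0 ≤ A) :
    ∃ C : ℝ, ∀ (α β X U R Q Y : ℝ) (w : ℝ → ℂ) (Φ : ℝ → ℝ),
      0 < X → 0 < U → 0 < R → 0 < Q → 1 ≤ Y → α ≤ β →
      ContDiff ℝ (⊤ : ℕ∞) w →
      (∀ t : ℝ, w t ≠ 0 → t ∈ Icc α β) →
      (∀ (j : ℕ) (t : ℝ), ‖iteratedDeriv j w t‖ ≤ Cw j * X * U ^ (-(j : ℤ))) →
      ContDiff ℝ (⊤ : ℕ∞) Φ →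
      (∀ t ∈ Icc α β, R ≤ |deriv Φ t|) →
      (∀ j : ℕ, 2 ≤ j → ∀ t ∈ Icc α β, |iteratedDeriv j Φ t| ≤ CΦ j * Y * Q ^ (-(j : ℤ))) →
      ‖∫ t : ℝ, w t * Complex.exp (Complex.I * (Φ t : ℂ))‖ ≤
        C * (β - α) * X * ((Q * R / Real.sqrt Y) ^ (-A) + (R * U) ^ (-A)) := by
  refine ⟨|Cw 0| + |ibpConst CΦ ⌈A⌉₊ Cw|, ?_⟩
  intro α β X U R Q Y w Φ hX hU hR hQ hY hab hw hsupp hwb hΦ hΦR hΦm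
  set V := min U (Q / √Y)
  have hV : 0 < V := lt_min hU (div_pos hQ (Real.sqrt_pos.mpr (by linarith)))
  have hwV : ∀ j, ∀ t ∈ Icc α β, ‖iteratedDeriv j w t‖ ≤ Cw j * X / V ^ j := fun j t _ =>
    le_div_pow_of_le_mul_zpow_neg (hwb j t) (norm_nonneg _) hV (min_le_left _ _)
  have hΦV : ∀ m, 2 ≤ m → ∀ t ∈ Icc α β, |iteratedDeriv m Φ t| ≤ CΦ m / V ^ m :=
    fun m hm t ht => le_div_pow_of_le_mul_mul_zpow_neg (hΦm m hm t ht) (abs_nonneg _) hY hV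
      (min_le_right _ _) hm
  calc _ ≤ (|Cw 0| + |ibpConst CΦ ⌈A⌉₊ Cw|) * (β - α) * X * (R * V) ^ (-A) :=
        norm_integral_mul_cexp_le_rpow_neg Cw CΦ hA hX.le hV hR hab hw hsupp
          hwV hΦ hΦR hΦV
    _ ≤ _ := by
        have hba : 0 ≤ β - α := sub_nonneg.mpr hab
        gcongr
        rw [mul_min_of_nonneg _ _ hR.le, show R * (Q / √Y) = Q * R / √Y by ring]
        exact min_rpow_neg_le_add (by positivity) (by positivity) A
end

section
/- Let $E$ be a number field with adele ring $\mathbb{A}_E$ and let $C_\mathfrak{P} > 0$ be given for each place $\mathfrak{P}$ of $E$, with $C_\mathfrak{P} = 1$ for almost all finite places. Then the number of elements $x \in E$ with $|x|_\mathfrak{P} \le C_\mathfrak{P}$ for all places $\mathfrak{P}$ is at most $C(E)\left(1 + \prod_\mathfrak{P} C_\mathfrak{P}\right)$ for a constant $C(E)$ depending only on $E$. -/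
/-!
Box principle against the product formula. Let `n = [E : ℚ]` and `c_w = C_w ^ (1 / m_w)`. Cut
the archimedean box `‖x‖_w ≤ c_w` into `(N + 1) ^ n` cells, subdividing each real coordinate of
`[-c_w, c_w]` into intervals of length `2 c_w / N`. If two distinct points `x, y` of the set lie
in one cell, then `|x - y|_w ≤ 4 c_w / N` at every infinite place, and `|x - y|_𝔓 ≤ C_𝔓` at every
finite place by the ultrametric inequality, so the product formula for `x - y` forces
`N ^ n ≤ 4 ^ n ∏ C_𝔓`. Taking `N = ⌈4 (1 + ∏ C_𝔓) ^ (1 / n)⌉` rules this out, so the set injects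
into the cells and has at most `(N + 1) ^ n ≤ 6 ^ n (1 + ∏ C_𝔓)` elements.
-/

open NumberField IsDedekindDomain
open scoped Classical

/-- The normalized absolute value at a finite place `v` of a number field `E`:
`‖x‖_v = N(𝔭_v)^{ord}` where `ord = toAdd` of the `v`-adic valuation (so
`‖ϖ‖_v = N(𝔭_v)^{-1}` for a uniformizer `ϖ`), and `‖0‖_v = 0`.  With this
normalization the product formula holds together with the normalized archimedean
absolute values `w(·)^{mult w}`. -/

noncomputable def finNorm {E : Type*} [Field E] [NumberField E]
    (v : HeightOneSpectrum (RingOfIntegers E)) (x : E) : ℝ :=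
  if hx : x = 0 then 0
  else
    (Ideal.absNorm v.asIdeal : ℝ) ^
      Multiplicative.toAdd (WithZero.unzero (((v.valuation E).ne_zero_iff).mpr hx))

open Module Finset Set Function

section FinNorm

variable {E : Type*} [Field E] [NumberField E]

theorem finNorm_eq_adicAbv (v : HeightOneSpectrum (𝓞 E)) (x : E) :
    finNorm v x = HeightOneSpectrum.adicAbv E v x := by
  rw [HeightOneSpectrum.adicAbv_def, finNorm]
  split_ifs with hx
  · simp [hx]
  · rw [WithZeroMulInt.toNNReal_neg_apply _ ((v.valuation E).ne_zero_iff.mpr hx)]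
    push_cast
    rfl

theorem finNorm_eq_equivHeightOneSpectrum_symm_apply (v : HeightOneSpectrum (𝓞 E)) (x : E) :
    finNorm v x = FinitePlace.equivHeightOneSpectrum.symm v x := by
  rw [FinitePlace.equivHeightOneSpectrum_symm_apply, FinitePlace.norm_embedding,
    finNorm_eq_adicAbv]

theorem finNorm_nonneg (v : HeightOneSpectrum (𝓞 E)) (x : E) : 0 ≤ finNorm v x := by
  rw [finNorm_eq_adicAbv]
  exact AbsoluteValue.nonneg _ x

theorem finNorm_sub_le_max (v : HeightOneSpectrum (𝓞 E)) (x y : E) :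
    finNorm v (x - y) ≤ max (finNorm v x) (finNorm v y) := by
  simp only [finNorm_eq_adicAbv, sub_eq_add_neg]
  simpa only [AbsoluteValue.map_neg] using HeightOneSpectrum.adicAbv_add_le_max E v x (-y)

theorem hasFiniteMulSupport_finNorm {x : E} (hx : x ≠ 0) :
    HasFiniteMulSupport fun v : HeightOneSpectrum (𝓞 E) => finNorm v x := by
  simp only [finNorm_eq_equivHeightOneSpectrum_symm_apply]
  exact (FinitePlace.hasFiniteMulSupport hx).fun_comp_of_injective
    FinitePlace.equivHeightOneSpectrum.symm.injective

theorem prod_mul_finprod_finNorm_eq_one {x : E} (hx : x ≠ 0) :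
    (∏ w : InfinitePlace E, w x ^ w.mult) * ∏ᶠ v, finNorm v x = 1 := by
  simp only [finNorm_eq_equivHeightOneSpectrum_symm_apply]
  rw [finprod_comp_equiv FinitePlace.equivHeightOneSpectrum.symm (f := fun w => w x)]
  exact prod_abs_eq_one hx

theorem one_le_prod_mul_finprod_of_forall_le {z : E} (hz : z ≠ 0) {a : InfinitePlace E → ℝ}
    {b : HeightOneSpectrum (𝓞 E) → ℝ} (hb : HasFiniteMulSupport b)
    (ha : ∀ w, w z ≤ a w) (hbz : ∀ v, finNorm v z ≤ b v) :
    1 ≤ (∏ w, a w ^ w.mult) * ∏ᶠ v, b v := by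
  have ha₀ : ∀ w, 0 ≤ a w := fun w => (apply_nonneg w z).trans (ha w)
  rw [← prod_mul_finprod_finNorm_eq_one hz]
  gcongr with w
  · exact finprod_nonneg fun v => finNorm_nonneg v z
  · exact prod_nonneg fun w _ => pow_nonneg (ha₀ w) _
  · exact ha w
  · exact finprod_le_finprod (hasFiniteMulSupport_finNorm hz) (finNorm_nonneg · z) hb hbz

end FinNorm

noncomputable section Cells

def cellIndex (N : ℕ) (c u : ℝ) : ℤ := ⌊(u / c + 1) * N / 2⌋

variable {N : ℕ} {c : ℝ}

theorem abs_sub_le_of_cellIndex_eq (hN : 0 < N) (hc : 0 < c) {u u' : ℝ}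
    (h : cellIndex N c u = cellIndex N c u') : |u - u'| ≤ 2 * c / N := by
  have hlt := Int.abs_sub_lt_one_of_floor_eq_floor h
  rw [show (u / c + 1) * N / 2 - (u' / c + 1) * N / 2 = (u - u') * N / (2 * c) by
    field_simp; ring, abs_div, abs_mul, Nat.abs_cast, abs_of_pos (by positivity : (0 : ℝ) < 2 * c),
    div_lt_one (by positivity)] at hlt
  rw [le_div_iff₀ (by positivity)]
  exact hlt.le

theorem cellIndex_mem_Icc (hc : 0 < c) {u : ℝ} (hu : |u| ≤ c) :
    cellIndex N c u ∈ Finset.Icc (0 : ℤ) N := by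
  obtain ⟨hlo, hhi⟩ := abs_le.mp hu
  have h₁ : -1 ≤ u / c := by rw [le_div_iff₀ hc]; linarith
  have h₂ : u / c ≤ 1 := by rw [div_le_iff₀ hc]; linarith
  rw [Finset.mem_Icc, cellIndex, Int.floor_nonneg, ← Int.floor_natCast (R := ℝ) N]
  constructor
  · have : 0 ≤ u / c + 1 := by linarith
    positivity
  · gcongr
    nlinarith [(Nat.cast_nonneg N : (0 : ℝ) ≤ N)]

def complexCell (N : ℕ) (c : ℝ) (z : ℂ) : ℤ × ℤ := (cellIndex N c z.re, cellIndex N c z.im)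

theorem norm_sub_le_of_complexCell_eq (hN : 0 < N) (hc : 0 < c) {z z' : ℂ}
    (h : complexCell N c z = complexCell N c z') : ‖z - z'‖ ≤ 4 * c / N := by
  obtain ⟨hre, him⟩ := Prod.ext_iff.mp h
  calc ‖z - z'‖ ≤ |(z - z').re| + |(z - z').im| := Complex.norm_le_abs_re_add_abs_im _
    _ ≤ 2 * c / N + 2 * c / N := by
        rw [Complex.sub_re, Complex.sub_im]
        exact add_le_add (abs_sub_le_of_cellIndex_eq hN hc hre)
          (abs_sub_le_of_cellIndex_eq hN hc him)
    _ = 4 * c / N := by ring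

end Cells

noncomputable section PlaceCells

variable {E : Type*} [Field E] [NumberField E]

def placeCells (N : ℕ) (c : InfinitePlace E → ℝ) (x : E) : InfinitePlace E → ℤ × ℤ :=
  fun w => complexCell N (c w) (w.embedding x)

def cellRange (N : ℕ) (c : InfinitePlace E → ℝ) : Finset (InfinitePlace E → ℤ × ℤ) :=
  Fintype.piFinset fun w =>
    Finset.Icc (0 : ℤ) N ×ˢ if w.IsReal then {cellIndex N (c w) 0} else Finset.Icc (0 : ℤ) N

theorem card_cellRange (N : ℕ) (c : InfinitePlace E → ℝ) :
    #(cellRange N c) = (N + 1) ^ finrank ℚ E := by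
  have hIcc : #(Finset.Icc (0 : ℤ) N) = N + 1 := by simp
  rw [cellRange, Fintype.card_piFinset, ← InfinitePlace.sum_mult_eq, ← prod_pow_eq_pow_sum]
  refine prod_congr rfl fun w _ => ?_
  rw [card_product, hIcc, InfinitePlace.mult]
  split_ifs <;> simp [sq]

theorem placeCells_mem_cellRange {N : ℕ} {c : InfinitePlace E → ℝ} (hc : ∀ w, 0 < c w) {x : E}
    (hx : ∀ w : InfinitePlace E, w x ≤ c w) : placeCells N c x ∈ cellRange N c := by
  refine Fintype.mem_piFinset.mpr fun w => mem_product.mpr ⟨?_, ?_⟩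
  · refine cellIndex_mem_Icc (hc w) ((Complex.abs_re_le_norm _).trans ?_)
    rw [InfinitePlace.norm_embedding_eq]
    exact hx w
  · split_ifs with hw
    · rw [Finset.mem_singleton]
      change cellIndex N (c w) (w.embedding x).im = _
      rw [← InfinitePlace.embedding_of_isReal_apply hw, Complex.ofReal_im]
    · refine cellIndex_mem_Icc (hc w) ((Complex.abs_im_le_norm _).trans ?_)
      rw [InfinitePlace.norm_embedding_eq]
      exact hx w

theorem apply_sub_le_of_placeCells_eq {N : ℕ} (hN : 0 < N) {c : InfinitePlace E → ℝ}
    (hc : ∀ w, 0 < c w) {x y : E} (h : placeCells N c x = placeCells N c y)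
    (w : InfinitePlace E) : w (x - y) ≤ 4 * c w / N := by
  rw [← InfinitePlace.norm_embedding_eq, map_sub]
  exact norm_sub_le_of_complexCell_eq hN (hc w) (congrFun h w)

end PlaceCells

noncomputable section PlaceRadius

variable {E : Type*} [Field E]

def placeRadius (Cinf : InfinitePlace E → ℝ) (w : InfinitePlace E) : ℝ :=
  Cinf w ^ ((w.mult : ℝ)⁻¹)

variable {Cinf : InfinitePlace E → ℝ}

theorem placeRadius_pos (hCinf : ∀ w, 0 < Cinf w) (w : InfinitePlace E) :
    0 < placeRadius Cinf w :=
  Real.rpow_pos_of_pos (hCinf w) _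

theorem placeRadius_pow_mult (hCinf : ∀ w, 0 < Cinf w) (w : InfinitePlace E) :
    placeRadius Cinf w ^ w.mult = Cinf w :=
  Real.rpow_inv_natCast_pow (hCinf w).le InfinitePlace.mult_ne_zero

end PlaceRadius

noncomputable section AdelicBox

variable {E : Type*} [Field E] [NumberField E]

def adelicBox (Cinf : InfinitePlace E → ℝ) (Cfin : HeightOneSpectrum (𝓞 E) → ℝ) : Set E :=
  {x | (∀ w : InfinitePlace E, w x ^ w.mult ≤ Cinf w) ∧ ∀ v, finNorm v x ≤ Cfin v}

variable {Cinf : InfinitePlace E → ℝ} {Cfin : HeightOneSpectrum (𝓞 E) → ℝ}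

theorem apply_le_placeRadius_of_mem_adelicBox (hCinf : ∀ w, 0 < Cinf w) {x : E}
    (hx : x ∈ adelicBox Cinf Cfin) (w : InfinitePlace E) : w x ≤ placeRadius Cinf w := by
  refine le_of_pow_le_pow_left₀ (InfinitePlace.mult_ne_zero (w := w))
    (placeRadius_pos hCinf w).le ?_
  rw [placeRadius_pow_mult hCinf]
  exact hx.1 w

theorem injOn_placeCells_adelicBox (hCinf : ∀ w, 0 < Cinf w) (hfin : HasFiniteMulSupport Cfin)
    {N : ℕ} (hN : 0 < N)
    (hsep : 4 ^ finrank ℚ E * ((∏ w, Cinf w) * ∏ᶠ v, Cfin v) < (N : ℝ) ^ finrank ℚ E) :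
    InjOn (placeCells N (placeRadius Cinf)) (adelicBox Cinf Cfin) := by
  intro x hx y hy hxy
  by_contra hne
  have hlow := one_le_prod_mul_finprod_of_forall_le (sub_ne_zero.mpr hne) hfin
    (apply_sub_le_of_placeCells_eq hN (placeRadius_pos hCinf) hxy)
    (fun v => (finNorm_sub_le_max v x y).trans (max_le (hx.2 v) (hy.2 v)))
  have hprod : ∏ w, (4 * placeRadius Cinf w / N) ^ w.mult
      = (4 / N) ^ finrank ℚ E * ∏ w, Cinf w := by
    simp_rw [mul_div_right_comm, mul_pow, placeRadius_pow_mult hCinf, prod_mul_distrib,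
      prod_pow_eq_pow_sum, InfinitePlace.sum_mult_eq]
  rw [hprod, mul_assoc, div_pow, div_mul_eq_mul_div, one_le_div (by positivity)] at hlow
  linarith

end AdelicBox

theorem exists_nat_four_pow_mul_lt_and_succ_pow_le {n : ℕ} (hn : n ≠ 0) {V : ℝ} (hV : 0 ≤ V) :
    ∃ N : ℕ, 0 < N ∧ 4 ^ n * V < (N : ℝ) ^ n ∧ ((N : ℝ) + 1) ^ n ≤ 6 ^ n * (1 + V) := by
  set t := (1 + V) ^ (n⁻¹ : ℝ)
  have ht : t ^ n = 1 + V := Real.rpow_inv_natCast_pow (by linarith) hn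
  have ht₁ : 1 ≤ t := Real.one_le_rpow (by linarith) (by positivity)
  refine ⟨⌈4 * t⌉₊, Nat.ceil_pos.mpr (by positivity), ?_, ?_⟩
  · calc 4 ^ n * V < 4 ^ n * t ^ n := by rw [ht]; gcongr; linarith
      _ = (4 * t) ^ n := (mul_pow _ _ _).symm
      _ ≤ _ := by gcongr; exact Nat.le_ceil _
  · calc ((⌈4 * t⌉₊ : ℝ) + 1) ^ n ≤ (6 * t) ^ n := by
          gcongr; linarith [Nat.ceil_lt_add_one (by positivity : 0 ≤ 4 * t)]
      _ = 6 ^ n * (1 + V) := by rw [mul_pow, ht]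

/-- **Adelic Minkowski-type counting estimate.**  For a number field `E` there is a
constant `C(E)` such that: whenever `C_w > 0` is given at every archimedean place and
`C_v > 0` at every finite place, with `C_v = 1` for almost all finite places, the number
of `x ∈ E` with `|x|_w ≤ C_w` and `|x|_v ≤ C_v` at every place (normalized absolute
values) is at most `C(E) (1 + ∏ C_w ∏ C_v)`. -/
theorem stmt13 (E : Type*) [Field E] [NumberField E] :
    ∃ C : ℝ, 0 < C ∧
      ∀ (Cinf : InfinitePlace E → ℝ)
        (Cfin : HeightOneSpectrum (RingOfIntegers E) → ℝ),
        (∀ w, 0 < Cinf w) → (∀ v, 0 < Cfin v) →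
        {v : HeightOneSpectrum (RingOfIntegers E) | Cfin v ≠ 1}.Finite →
        {x : E | (∀ w : InfinitePlace E, w x ^ w.mult ≤ Cinf w) ∧
            ∀ v, finNorm v x ≤ Cfin v}.Finite ∧
          (Nat.card {x : E | (∀ w : InfinitePlace E, w x ^ w.mult ≤ Cinf w) ∧
              ∀ v, finNorm v x ≤ Cfin v} : ℝ) ≤
            C * (1 + (∏ w : InfinitePlace E, Cinf w) * ∏ᶠ v, Cfin v) := by
  refine ⟨6 ^ finrank ℚ E, by positivity, fun Cinf Cfin hCinf hCfin hfin => ?_⟩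
  change (adelicBox Cinf Cfin).Finite ∧ (Nat.card (adelicBox Cinf Cfin) : ℝ) ≤ _
  have hV : 0 ≤ (∏ w, Cinf w) * ∏ᶠ v, Cfin v :=
    mul_nonneg (prod_nonneg fun w _ => (hCinf w).le) (finprod_nonneg fun v => (hCfin v).le)
  obtain ⟨N, hN, hsep, hcount⟩ :=
    exists_nat_four_pow_mul_lt_and_succ_pow_le (finrank_pos (R := ℚ) (M := E)).ne' hV
  have hmaps : MapsTo (placeCells N (placeRadius Cinf)) (adelicBox Cinf Cfin)
      (cellRange N (placeRadius Cinf)) := fun x hx =>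
    placeCells_mem_cellRange (placeRadius_pos hCinf)
      (apply_le_placeRadius_of_mem_adelicBox hCinf hx)
  have hinj := injOn_placeCells_adelicBox hCinf hfin hN hsep
  refine ⟨(cellRange N _).finite_toSet.of_injOn hmaps hinj, ?_⟩
  calc (Nat.card (adelicBox Cinf Cfin) : ℝ) ≤ #(cellRange N (placeRadius Cinf)) := by
        rw [Nat.card_coe_set_eq, ← ncard_coe_finset]
        exact_mod_cast ncard_le_ncard_of_injOn _ hmaps hinj (finite_toSet _)
    _ = ((N : ℝ) + 1) ^ finrank ℚ E := by rw [card_cellRange, Nat.cast_pow, Nat.cast_succ]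
    _ ≤ _ := hcount
end
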